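/- arXiv:2106.04333 — 4 statements merged into one kernel-verified Lean document; each statement's English description precedes it below -/
import Mathlib

section
/- Let g(x) = (1+x)·log(1+x) − x for x ≥ 0. Then for every x ≥ 0 one has g(2x/3 + √(2x)) ≥ x. Equivalently, the inverse function g⁻¹ (on [0,∞)) satisfies g⁻¹(x) ≤ 2x/3 + √(2x) for all x > 0. -/
/-!
Since `g(0) = 0` and `g'(y) = log (1 + y) ≥ 2y / (y + 2)`, comparing derivatives gives
Bernstein's lower bound `g(y) ≥ y² / (2 (1 + y/3))` for `y ≥ 0`. The point `y = 2x/3 + √(2x)`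
dominates the positive root `x/3 + √(x²/9 + 2x)` of `y² = 2x (1 + y/3)`, so the bound is at least `x`
there.
-/

/-- The function `g(x) = (1+x) log(1+x) - x`. -/
noncomputable def g (y : ℝ) : ℝ := (1 + y) * Real.log (1 + y) - y

open Real Set

lemma hasDerivAt_g {y : ℝ} (hy : -1 < y) : HasDerivAt g (log (1 + y)) y := by
  have hlin : HasDerivAt (fun y : ℝ => 1 + y) 1 y := (hasDerivAt_id' y).const_add 1
  have hpos : 1 + y ≠ 0 := by linarith
  refine ((hlin.mul (hlin.log hpos)).sub (hasDerivAt_id' y)).congr_deriv ?_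
  field_simp
  ring

lemma hasDerivAt_sq_div_bernstein {y : ℝ} (hy : y ≠ -3) :
    HasDerivAt (fun y : ℝ => y ^ 2 / (2 * (1 + y / 3)))
      (y * (y + 6) / (6 * (1 + y / 3) ^ 2)) y := by
  have hden : 2 * (1 + y / 3) ≠ 0 := fun h => hy (by linarith)
  have hd : HasDerivAt (fun y : ℝ => 2 * (1 + y / 3)) (2 * (1 / 3)) y :=
    (((hasDerivAt_id' y).div_const 3).const_add 1).const_mul 2
  refine ((hasDerivAt_pow 2 y).div hd hden).congr_deriv ?_
  field_simp
  ring

lemma sq_div_bernstein_le_g {y : ℝ} (hy : 0 ≤ y) : y ^ 2 / (2 * (1 + y / 3)) ≤ g y := by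
  set h : ℝ → ℝ := fun y => g y - y ^ 2 / (2 * (1 + y / 3))
  have hderiv : ∀ z ∈ Ici (0 : ℝ),
      HasDerivAt h (log (1 + z) - z * (z + 6) / (6 * (1 + z / 3) ^ 2)) z := fun z hz =>
    (hasDerivAt_g (by linarith [mem_Ici.1 hz])).sub
      (hasDerivAt_sq_div_bernstein (by linarith [mem_Ici.1 hz]))
  have hmono : MonotoneOn h (Ici 0) := by
    refine monotoneOn_of_hasDerivWithinAt_nonneg (convex_Ici 0)
      (fun z hz => (hderiv z hz).continuousAt.continuousWithinAt)
      (fun z hz => (hderiv z (interior_subset hz)).hasDerivWithinAt) fun z hz => ?_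
    rw [interior_Ici] at hz
    have hz : 0 < z := hz
    have hcmp : z * (z + 6) / (6 * (1 + z / 3) ^ 2) ≤ 2 * z / (z + 2) := by
      -- after clearing denominators the two sides differ by `z³ / 3`
      rw [div_le_div_iff₀ (by positivity) (by positivity)]
      nlinarith [pow_pos hz 3]
    linarith [le_log_one_add_of_nonneg hz.le]
  have h0 : h 0 = 0 := by simp [h, g]
  exact sub_nonneg.1 (h0 ▸ hmono self_mem_Ici (mem_Ici.2 hy) hy)

lemma le_sq_div_bernstein {x : ℝ} (hx : 0 ≤ x) :
    x ≤ (2 * x / 3 + √(2 * x)) ^ 2 / (2 * (1 + (2 * x / 3 + √(2 * x)) / 3)) := by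
  have hs : 0 ≤ √(2 * x) := sqrt_nonneg _
  have hs2 : √(2 * x) ^ 2 = 2 * x := sq_sqrt (by linarith)
  rw [le_div_iff₀ (by positivity)]
  nlinarith [mul_nonneg hx hs]

/-- For every `x ≥ 0`, `g(2x/3 + √(2x)) ≥ x`; equivalently, the inverse of `g`
on `[0,∞)` satisfies `g⁻¹(x) ≤ 2x/3 + √(2x)`. -/
theorem stmt_0 (x : ℝ) (hx : 0 ≤ x) :
    g (2 * x / 3 + Real.sqrt (2 * x)) ≥ x :=
  (le_sq_div_bernstein hx).trans (sq_div_bernstein_le_g (by positivity))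
end

section
/- Let L > 0, λ₀ > 0, 0 ≤ τ₁ < τ₂ ≤ 1, and let N be a Poisson random variable with parameter L·x where x > 0. Define T = (N² − N)/(L²(τ₂−τ₁)) − 2λ₀·N/L + λ₀²(τ₂−τ₁). Then Var(T) = (4x/L)·( x/(τ₂−τ₁) − λ₀ )² + (2/L²)·x²/(τ₂−τ₁)². -/
/-- The Poisson probability mass function with parameter `ξ`. -/
noncomputable def poissonPMF (ξ : ℝ) (k : ℕ) : ℝ :=
  Real.exp (-ξ) * ξ ^ k / Nat.factorial k

/-- The quadratic statistic `T_{τ₁,τ₂}` evaluated at a count `k`: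
`T = (k² − k)/(L²(τ₂−τ₁)) − 2λ₀ k / L + λ₀² (τ₂−τ₁)`. -/
noncomputable def Tstat (L lam0 τ₁ τ₂ : ℝ) (k : ℕ) : ℝ :=
  ((k : ℝ) ^ 2 - k) / (L ^ 2 * (τ₂ - τ₁)) - 2 * lam0 * k / L + lam0 ^ 2 * (τ₂ - τ₁)

/-!
The falling factorials of `N ~ Poisson(ξ)` have expectations `E[(N)ₘ] = ξ ^ m`. Since
`T = a N (N - 1) + b N + c` with `a = 1/(L²(τ₂-τ₁))`, `b = -2λ₀/L`, the centred square `(T - E T)²`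
is a combination of `(N)₀, …, (N)₄`, and its expectation collapses to `ξ (2aξ + b)² + 2a²ξ²`,
which for `ξ = Lx` is the claimed variance.
-/

open Finset Nat

lemma Nat.cast_descFactorial_eq_prod_range {R : Type*} [CommRing R] (n m : ℕ) :
    (n.descFactorial m : R) = ∏ j ∈ range m, ((n : R) - j) := by
  rw [← descPochhammer_eval_eq_descFactorial, descPochhammer_eval_eq_prod_range]

theorem hasSum_poissonPMF_mul_descFactorial (ξ : ℝ) (m : ℕ) :
    HasSum (fun k : ℕ => poissonPMF ξ k * (k.descFactorial m : ℝ)) (ξ ^ m) := by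
  set f : ℕ → ℝ := fun k => poissonPMF ξ k * (k.descFactorial m : ℝ)
  have hf_lt : ∀ i ∈ range m, f i = 0 := fun i hi => by
    simp [f, Nat.descFactorial_eq_zero_iff_lt.mpr (mem_range.mp hi)]
  have hf_add : ∀ j : ℕ, f (j + m) = Real.exp (-ξ) * ξ ^ m * (ξ ^ j / j !) := fun j => by
    have hfac : (j ! : ℝ) * (j + m).descFactorial m = (j + m)! := by
      have := Nat.factorial_mul_descFactorial (Nat.le_add_left m j)
      rw [Nat.add_sub_cancel] at this
      exact_mod_cast this
    simp only [f, poissonPMF]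
    rw [← hfac, pow_add]
    field_simp
  have hexp : HasSum (fun j : ℕ => ξ ^ j / j !) (Real.exp ξ) := by
    simpa [← Real.exp_eq_exp_ℝ] using NormedSpace.expSeries_div_hasSum_exp (𝔸 := ℝ) ξ
  have hshift : HasSum (fun j => f (j + m)) (ξ ^ m) := by
    have h := hexp.mul_left (Real.exp (-ξ) * ξ ^ m)
    rw [mul_right_comm, ← Real.exp_add, neg_add_cancel, Real.exp_zero, one_mul] at h
    exact h.congr_fun hf_add
  exact (hasSum_nat_add_iff' m).mp (by simpa [sum_eq_zero hf_lt] using hshift)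

theorem hasSum_poissonPMF_mul_quadratic (ξ a b c : ℝ) :
    HasSum (fun k : ℕ => poissonPMF ξ k * (a * (k * (k - 1)) + b * k + c))
      (a * ξ ^ 2 + b * ξ + c) := by
  have H := hasSum_poissonPMF_mul_descFactorial ξ
  -- The ascription swaps in `ℝ`'s own `AddCommMonoid` instance; otherwise `convert` stalls on it.
  have h : HasSum (α := ℝ) _ _ :=
    (((H 2).mul_left a).add ((H 1).mul_left b)).add ((H 0).mul_left c)
  convert h using 1
  · funext k
    simp only [Nat.cast_descFactorial_eq_prod_range, prod_range_succ, prod_range_zero]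
    push_cast
    ring
  · ring

theorem hasSum_poissonPMF_mul_sq_sub_quadratic (ξ a b c : ℝ) :
    HasSum (fun k : ℕ => poissonPMF ξ k *
        (a * (k * (k - 1)) + b * k + c - (a * ξ ^ 2 + b * ξ + c)) ^ 2)
      (ξ * (2 * a * ξ + b) ^ 2 + 2 * a ^ 2 * ξ ^ 2) := by
  have H := hasSum_poissonPMF_mul_descFactorial ξ
  set M := a * ξ ^ 2 + b * ξ
  -- Coefficients from `(k)₂² = (k)₄ + 4 (k)₃ + 2 (k)₂`, `(k)₂ k = (k)₃ + 2 (k)₂`, `k² = (k)₂ + k`.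
  have h : HasSum (α := ℝ) _ _ :=
    (((((H 4).mul_left (a ^ 2)).add ((H 3).mul_left (4 * a ^ 2 + 2 * a * b))).add
      ((H 2).mul_left (2 * a ^ 2 + 4 * a * b + b ^ 2 - 2 * M * a))).add
      ((H 1).mul_left (b ^ 2 - 2 * M * b))).add ((H 0).mul_left (M ^ 2))
  convert h using 1
  · funext k
    simp only [Nat.cast_descFactorial_eq_prod_range, prod_range_succ, prod_range_zero]
    push_cast
    ring
  · ring

lemma Tstat_eq (L lam0 τ₁ τ₂ : ℝ) (k : ℕ) :
    Tstat L lam0 τ₁ τ₂ k =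
      (L ^ 2 * (τ₂ - τ₁))⁻¹ * (k * (k - 1)) + (-2 * lam0 / L) * k + lam0 ^ 2 * (τ₂ - τ₁) := by
  simp only [Tstat]
  ring

theorem stmt_5_general (L lam0 τ₁ τ₂ x : ℝ) (hL : 0 < L) :
    ∑' k : ℕ, poissonPMF (L * x) k *
        (Tstat L lam0 τ₁ τ₂ k - ∑' j : ℕ, poissonPMF (L * x) j * Tstat L lam0 τ₁ τ₂ j) ^ 2
      = 4 * x / L * (x / (τ₂ - τ₁) - lam0) ^ 2 + 2 / L ^ 2 * (x ^ 2 / (τ₂ - τ₁) ^ 2) := by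
  simp only [Tstat_eq]
  rw [(hasSum_poissonPMF_mul_quadratic _ _ _ _).tsum_eq,
    (hasSum_poissonPMF_mul_sq_sub_quadratic _ _ _ _).tsum_eq]
  field_simp
  ring

/-- If `N ~ Poisson(Lx)`, then
`Var(T) = (4x/L)(x/(τ₂−τ₁) − λ₀)² + (2/L²) x²/(τ₂−τ₁)²`. -/
theorem stmt_5 (L lam0 τ₁ τ₂ x : ℝ) (hL : 0 < L) (hlam : 0 < lam0)
    (h1 : 0 ≤ τ₁) (h12 : τ₁ < τ₂) (h2 : τ₂ ≤ 1) (hx : 0 < x) :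
    ∑' k : ℕ, poissonPMF (L * x) k *
        (Tstat L lam0 τ₁ τ₂ k - ∑' j : ℕ, poissonPMF (L * x) j * Tstat L lam0 τ₁ τ₂ j) ^ 2
      = 4 * x / L * (x / (τ₂ - τ₁) - lam0) ^ 2 + 2 / L ^ 2 * (x ^ 2 / (τ₂ - τ₁) ^ 2) :=
  stmt_5_general L lam0 τ₁ τ₂ x hL
end

section
/- Let P and Q be probability measures on a measurable space with P absolutely continuous with respect to Q and dP/dQ square-integrable under Q. Then for every measurable set A, |P(A) − Q(A)| ≤ (1/2)·√( E_Q[(dP/dQ)²] − 1 ). -/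
/-!
Write `f = dP/dQ`. The centred density `f - 1` has `Q`-integral zero, so its integrals over `A`
and over `Aᶜ` cancel and `|P(A) - Q(A)| = |∫_A (f - 1) dQ|` is at most half of `∫ |f - 1| dQ`.
By Cauchy–Schwarz (the variance of `|f - 1|` is nonnegative) the latter is at most
`√(∫ (f - 1)² dQ)`, and `∫ (f - 1)² dQ = Var_Q f = ∫ f² dQ - 1`.
-/

open MeasureTheory ProbabilityTheory

lemma abs_setIntegral_le_half_integral_abs_of_integral_eq_zero {α : Type*} [MeasurableSpace α]
    {μ : Measure α} {g : α → ℝ} (hg : Integrable g μ) (hg_zero : ∫ x, g x ∂μ = 0)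
    {s : Set α} (hs : MeasurableSet s) :
    |∫ x in s, g x ∂μ| ≤ 1 / 2 * ∫ x, |g x| ∂μ := by
  have hcompl : ∫ x in sᶜ, g x ∂μ = -∫ x in s, g x ∂μ := by
    linarith [integral_add_compl hs hg]
  have hs_le := abs_integral_le_integral_abs (μ := μ.restrict s) (f := g)
  have hcompl_le := abs_integral_le_integral_abs (μ := μ.restrict sᶜ) (f := g)
  rw [hcompl, abs_neg] at hcompl_le
  linarith [integral_add_compl hs hg.abs]

lemma integral_abs_le_sqrt_integral_sq {Ω : Type*} [MeasurableSpace Ω] {μ : Measure Ω}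
    [IsProbabilityMeasure μ] {X : Ω → ℝ} (hX : MemLp X 2 μ) :
    ∫ ω, |X ω| ∂μ ≤ Real.sqrt (∫ ω, X ω ^ 2 ∂μ) := by
  have hvar := variance_nonneg |X| μ
  rw [variance_eq_sub hX.abs] at hvar
  simp only [Pi.pow_apply, Pi.abs_apply, sq_abs] at hvar
  exact Real.le_sqrt_of_sq_le (by linarith)

/-- Let `P ≪ Q` be probability measures with `dP/dQ ∈ L²(Q)`. Then for every
measurable set `A`, `|P(A) − Q(A)| ≤ (1/2) √(E_Q[(dP/dQ)²] − 1)`. -/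
theorem stmt_10 {Ω : Type*} [MeasurableSpace Ω] (P Q : Measure Ω)
    [IsProbabilityMeasure P] [IsProbabilityMeasure Q]
    (hac : P ≪ Q)
    (hL2 : MemLp (fun ω => (P.rnDeriv Q ω).toReal) 2 Q)
    (A : Set Ω) (hA : MeasurableSet A) :
    |(P A).toReal - (Q A).toReal|
      ≤ (1 / 2) * Real.sqrt ((∫ ω, ((P.rnDeriv Q ω).toReal) ^ 2 ∂Q) - 1) := by
  set f : Ω → ℝ := fun ω => (P.rnDeriv Q ω).toReal
  have hf : Integrable f Q := Measure.integrable_toReal_rnDeriv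
  have hf_one : ∫ ω, f ω ∂Q = 1 := by simp [f, Measure.integral_toReal_rnDeriv hac]
  have hcentered_zero : ∫ ω, (f ω - 1) ∂Q = 0 := by
    simp [integral_sub hf (integrable_const 1), hf_one]
  have hcentered_A : ∫ ω in A, (f ω - 1) ∂Q = (P A).toReal - (Q A).toReal := by
    rw [integral_sub hf.integrableOn (integrable_const 1), Measure.setIntegral_toReal_rnDeriv hac]
    simp [measureReal_def]
  have hvar : ∫ ω, (f ω - 1) ^ 2 ∂Q = ∫ ω, f ω ^ 2 ∂Q - 1 := by
    have := variance_eq_sub hL2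
    rw [variance_eq_integral hL2.aemeasurable] at this
    simpa [hf_one] using this
  rw [← hcentered_A, ← hvar]
  calc |∫ ω in A, (f ω - 1) ∂Q| ≤ 1 / 2 * ∫ ω, |f ω - 1| ∂Q :=
        abs_setIntegral_le_half_integral_abs_of_integral_eq_zero (hf.sub (integrable_const 1))
          hcentered_zero hA
    _ ≤ 1 / 2 * Real.sqrt (∫ ω, (f ω - 1) ^ 2 ∂Q) := by
        gcongr
        exact integral_abs_le_sqrt_integral_sq (hL2.sub (memLp_const 1))
end

section
/- Let P and Q be probability measures on a measurable space with P ≪ Q and dP/dQ ∈ L²(Q), let α, β ∈ (0,1) with α + β < 1, and suppose E_Q[(dP/dQ)²] ≤ 1 + 4(1−α−β)². Then for every measurable set A (rejection region of a test) with Q(A) ≤ α, one has P(Aᶜ) ≥ β. -/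
/-!
The covariance under `Q` of the likelihood ratio `dP/dQ` and the indicator of `A` is
`P(A) - Q(A)`. By Cauchy–Schwarz its square is at most the product of the variances:
`Var_Q(dP/dQ) = χ²(P‖Q)` and `Var_Q(1_A) = Q(A)(1 - Q(A)) ≤ 1/4`. Hence
`P(A) ≤ Q(A) + √χ²(P‖Q) / 2 ≤ α + (1 - α - β)`, i.e. `P(Aᶜ) ≥ β`.
-/

open MeasureTheory ProbabilityTheory

namespace ProbabilityTheory

variable {Ω : Type*} {mΩ : MeasurableSpace Ω} {μ : Measure Ω} {X Y : Ω → ℝ}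

lemma covariance_sq_le_variance_mul_variance [IsFiniteMeasure μ] (hX : MemLp X 2 μ)
    (hY : MemLp Y 2 μ) : cov[X, Y; μ] ^ 2 ≤ Var[X; μ] * Var[Y; μ] := by
  have hquad (t : ℝ) : 0 ≤ Var[Y; μ] * (t * t) + (2 * cov[X, Y; μ]) * t + Var[X; μ] := by
    have := variance_nonneg (X + t • Y) μ
    rw [variance_add hX (hY.const_smul t), variance_smul, covariance_smul_right] at this
    linarith
  have := discrim_le_zero hquad
  rw [discrim] at this
  linarith

lemma variance_indicator_one_le [IsProbabilityMeasure μ] {A : Set Ω} (hA : MeasurableSet A) :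
    Var[A.indicator 1; μ] ≤ 1 / 4 := by
  have := variance_le_sq_of_bounded (a := 0) (b := 1) (X := A.indicator 1)
    (Filter.Eventually.of_forall fun ω ↦ by by_cases hω : ω ∈ A <;> simp [hω])
    ((measurable_const.indicator hA).aemeasurable) (μ := μ)
  norm_num at this
  linarith

noncomputable def chiSqDiv (P Q : Measure Ω) : ℝ :=
  ∫ ω, (P.rnDeriv Q ω).toReal ^ 2 ∂Q - 1

variable {P Q : Measure Ω} [IsProbabilityMeasure P] [IsProbabilityMeasure Q]

lemma variance_toReal_rnDeriv (hac : P ≪ Q) (hL2 : MemLp (fun ω ↦ (P.rnDeriv Q ω).toReal) 2 Q) :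
    Var[fun ω ↦ (P.rnDeriv Q ω).toReal; Q] = chiSqDiv P Q := by
  rw [variance_eq_sub hL2, Measure.integral_toReal_rnDeriv hac]
  simp [chiSqDiv]

lemma covariance_toReal_rnDeriv_indicator (hac : P ≪ Q)
    (hL2 : MemLp (fun ω ↦ (P.rnDeriv Q ω).toReal) 2 Q) {A : Set Ω} (hA : MeasurableSet A) :
    cov[fun ω ↦ (P.rnDeriv Q ω).toReal, A.indicator 1; Q] = P.real A - Q.real A := by
  have hind : MemLp (A.indicator (1 : Ω → ℝ)) 2 Q :=
    memLp_indicator_const 2 hA 1 (Or.inr (measure_ne_top Q A))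
  rw [covariance_eq_sub hL2 hind, Measure.integral_toReal_rnDeriv hac,
    integral_indicator_one hA, probReal_univ, one_mul]
  have hmul : (fun ω ↦ (P.rnDeriv Q ω).toReal) * A.indicator 1 =
      A.indicator fun ω ↦ (P.rnDeriv Q ω).toReal := by
    ext ω; by_cases hω : ω ∈ A <;> simp [hω]
  rw [hmul, integral_indicator hA, Measure.setIntegral_toReal_rnDeriv hac]

lemma sq_measureReal_sub_le_chiSqDiv (hac : P ≪ Q)
    (hL2 : MemLp (fun ω ↦ (P.rnDeriv Q ω).toReal) 2 Q) {A : Set Ω} (hA : MeasurableSet A) :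
    (P.real A - Q.real A) ^ 2 ≤ chiSqDiv P Q / 4 := by
  have hind : MemLp (A.indicator (1 : Ω → ℝ)) 2 Q :=
    memLp_indicator_const 2 hA 1 (Or.inr (measure_ne_top Q A))
  have hvar : Var[A.indicator 1; Q] ≤ 1 / 4 := variance_indicator_one_le hA
  have hchi : 0 ≤ chiSqDiv P Q := variance_toReal_rnDeriv hac hL2 ▸ variance_nonneg _ _
  calc (P.real A - Q.real A) ^ 2
      = cov[fun ω ↦ (P.rnDeriv Q ω).toReal, A.indicator 1; Q] ^ 2 := by
        rw [covariance_toReal_rnDeriv_indicator hac hL2 hA]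
    _ ≤ chiSqDiv P Q * Var[A.indicator 1; Q] := by
        rw [← variance_toReal_rnDeriv hac hL2]
        exact covariance_sq_le_variance_mul_variance hL2 hind
    _ ≤ chiSqDiv P Q / 4 := by nlinarith

end ProbabilityTheory

theorem stmt_11_general {Ω : Type*} [MeasurableSpace Ω] (P Q : Measure Ω)
    [IsProbabilityMeasure P] [IsProbabilityMeasure Q]
    (hac : P ≪ Q)
    (hL2 : MemLp (fun ω => (P.rnDeriv Q ω).toReal) 2 Q)
    (α β : ℝ)
    (hαβ : α + β < 1)
    (hchi : ∫ ω, ((P.rnDeriv Q ω).toReal) ^ 2 ∂Q ≤ 1 + 4 * (1 - α - β) ^ 2)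
    (A : Set Ω) (hA : MeasurableSet A) (hQA : (Q A).toReal ≤ α) :
    β ≤ (P Aᶜ).toReal := by
  rw [← measureReal_def] at hQA ⊢
  have hchiDiv : chiSqDiv P Q / 4 ≤ (1 - α - β) ^ 2 := by
    rw [chiSqDiv]; linarith
  have hPA : P.real A - Q.real A ≤ 1 - α - β :=
    le_of_abs_le (abs_le_of_sq_le_sq
      ((sq_measureReal_sub_le_chiSqDiv hac hL2 hA).trans hchiDiv) (by linarith))
  rw [probReal_compl_eq_one_sub hA]
  linarith

/-- Let `P ≪ Q` be probability measures with `dP/dQ ∈ L²(Q)`, `α, β ∈ (0,1)` with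
`α + β < 1` and `E_Q[(dP/dQ)²] ≤ 1 + 4(1−α−β)²`. Then for every measurable set `A`
with `Q(A) ≤ α`, one has `P(Aᶜ) ≥ β`. -/
theorem stmt_11 {Ω : Type*} [MeasurableSpace Ω] (P Q : Measure Ω)
    [IsProbabilityMeasure P] [IsProbabilityMeasure Q]
    (hac : P ≪ Q)
    (hL2 : MemLp (fun ω => (P.rnDeriv Q ω).toReal) 2 Q)
    (α β : ℝ) (hα : α ∈ Set.Ioo (0 : ℝ) 1) (hβ : β ∈ Set.Ioo (0 : ℝ) 1)
    (hαβ : α + β < 1)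
    (hchi : ∫ ω, ((P.rnDeriv Q ω).toReal) ^ 2 ∂Q ≤ 1 + 4 * (1 - α - β) ^ 2)
    (A : Set Ω) (hA : MeasurableSet A) (hQA : (Q A).toReal ≤ α) :
    β ≤ (P Aᶜ).toReal :=
  stmt_11_general P Q hac hL2 α β hαβ hchi A hA hQA
end
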